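/- Let p > 1, let Ω ⊆ ℝ^N be open, and let ψ : Ω → ℝ be a C² function whose flux is differentiable at a point x ∈ Ω with ∇ψ(x) ≠ 0 and Δ_p ψ(x) = −1. Let f : [0, a_f) → (0, ∞) (0 < a_f ≤ ∞) be a nondecreasing C¹ function with f > 0 on [0, a_f), let F(t) = ∫₀ᵗ f(s)^{−1/(p−1)} ds with ‖F‖_∞ := lim_{t→a_f} F(t), and let α > 0 satisfy 0 < α·ψ(x) and α·ψ(y) < ‖F‖_∞ for y in a neighborhood of x. Then v := F^{−1}∘(α·ψ) is defined near x, its flux is differentiable at x, and Δ_p v(x) = (α^p·f'(v(x))·f(v(x))^{(2−p)/(p−1)}·‖∇ψ(x)‖^p − α^{p−1})·f(v(x)). -/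

import Mathlib

open Real Set Metric MeasureTheory

/-- The "flux" of `u` at `x`: `‖∇u(x)‖^(p-2) ∇u(x)` (equal to `0` when `∇u(x) = 0`,
by the junk-value conventions of `Real.rpow`, since `p ≠ 2` gives `0 ^ (p-2) = 0` and
for `p = 2` the scalar multiplies the zero vector). -/
noncomputable def flux {N : ℕ} (p : ℝ) (u : EuclideanSpace ℝ (Fin N) → ℝ)
    (x : EuclideanSpace ℝ (Fin N)) : EuclideanSpace ℝ (Fin N) :=
  ‖gradient u x‖ ^ (p - 2) • gradient u x

/-- The divergence of a vector field `V` at `x`: `∑ i, ∂V_i/∂x_i (x)`. -/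
noncomputable def pdiv {N : ℕ} (V : EuclideanSpace ℝ (Fin N) → EuclideanSpace ℝ (Fin N))
    (x : EuclideanSpace ℝ (Fin N)) : ℝ :=
  ∑ i : Fin N, fderiv ℝ V x (EuclideanSpace.single i 1) i

open Filter Topology

/-! Since `F' = f ^ (-1/(p-1)) > 0`, `F` is strictly increasing and `F⁻¹` has derivative
`f(t) ^ (1/(p-1))` at `F(t)`. Hence `∇v = α f(v) ^ (1/(p-1)) ∇ψ` near `x`, and since the flux is
positively homogeneous of degree `p - 1` in the gradient, `V_v = α ^ (p-1) f(v) V_ψ` near `x`.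
The product rule for the divergence then gives
`Δ_p v = α ^ (p-1) f(v) Δ_p ψ + α ^ (p-1) f'(v) ⟪∇v, V_ψ⟫`, and `⟪∇ψ, V_ψ⟫ = ‖∇ψ‖ ^ p`. -/

theorem HasDerivAt.of_leftInvOn_Icc {F G : ℝ → ℝ} {a b t F' : ℝ}
    (hF : ContinuousOn F (Icc a b)) (hmono : StrictMonoOn F (Icc a b))
    (hinv : LeftInvOn G F (Icc a b)) (ht : t ∈ Ioo a b) (hd : HasDerivAt F F' t)
    (hF' : F' ≠ 0) : HasDerivAt G F'⁻¹ (F t) := by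
  have hsub : Ioo a b ⊆ Icc a b := Ioo_subset_Icc_self
  have hab : a ≤ b := (ht.1.trans ht.2).le
  have himage : F '' Ioo a b ∈ 𝓝 (F t) :=
    mem_of_superset
      (Ioo_mem_nhds (hmono (left_mem_Icc.2 hab) (hsub ht) ht.1)
        (hmono (hsub ht) (right_mem_Icc.2 hab) ht.2))
      (intermediate_value_Ioo hab hF)
  have hGt : G (F t) = t := hinv (hsub ht)
  have hGmono : MonotoneOn G (F '' Ioo a b) := by
    rintro _ ⟨u, hu, rfl⟩ _ ⟨w, hw, rfl⟩ h
    rw [hinv (hsub hu), hinv (hsub hw)]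
    exact (hmono.le_iff_le (hsub hu) (hsub hw)).1 h
  have hGcont : ContinuousAt G (F t) := by
    refine continuousAt_of_monotoneOn_of_image_mem_nhds hGmono himage ?_
    rw [(hinv.mono hsub).image_image, hGt]
    exact Ioo_mem_nhds ht.1 ht.2
  refine HasDerivAt.of_local_left_inverse hGcont (hGt ▸ hd) hF' ?_
  filter_upwards [himage] with s ⟨u, hu, hus⟩
  rw [← hus, hinv (hsub hu)]

section Primitive

variable {g : ℝ → ℝ} {a b : ℝ}

theorem hasDerivAt_integral_of_continuousOn_Icc (hg : ContinuousOn g (Icc a b)) {t : ℝ}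
    (ht : t ∈ Ioo a b) : HasDerivAt (fun u => ∫ x in a..u, g x) (g t) t :=
  intervalIntegral.integral_hasDerivAt_right
    ((hg.mono (uIcc_subset_Icc (left_mem_Icc.2 (ht.1.trans ht.2).le)
      (Ioo_subset_Icc_self ht))).intervalIntegrable)
    ((hg.mono Ioo_subset_Icc_self).stronglyMeasurableAtFilter isOpen_Ioo t ht)
    (hg.continuousAt (Icc_mem_nhds ht.1 ht.2))

theorem continuousOn_integral_of_continuousOn_Icc (hg : ContinuousOn g (Icc a b)) :
    ContinuousOn (fun u => ∫ x in a..u, g x) (Icc a b) := by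
  rcases le_or_gt a b with hab | hba
  · rw [← uIcc_of_le hab] at hg ⊢
    exact intervalIntegral.continuousOn_primitive_interval hg.integrableOn_uIcc
  · simp [Icc_eq_empty_of_lt hba]

theorem strictMonoOn_integral_of_pos (hg : ContinuousOn g (Icc a b))
    (hpos : ∀ t ∈ Icc a b, 0 < g t) : StrictMonoOn (fun u => ∫ x in a..u, g x) (Icc a b) := by
  refine strictMonoOn_of_deriv_pos (convex_Icc a b) ?_ fun t ht => ?_
  · exact continuousOn_integral_of_continuousOn_Icc hg
  · rw [interior_Icc] at ht
    rw [(hasDerivAt_integral_of_continuousOn_Icc hg ht).deriv]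
    exact hpos t (Ioo_subset_Icc_self ht)

theorem exists_integral_eq_hasDerivAt_inv {G : ℝ → ℝ} {s : ℝ} (hab : a ≤ b)
    (hg : ContinuousOn g (Icc a b)) (hpos : ∀ t ∈ Icc a b, 0 < g t)
    (hinv : LeftInvOn G (fun u => ∫ x in a..u, g x) (Icc a b))
    (hs : s ∈ Ioo 0 (∫ x in a..b, g x)) :
    ∃ t ∈ Ioo a b, ∫ x in a..t, g x = s ∧ HasDerivAt G (g t)⁻¹ s := by
  have hcont := continuousOn_integral_of_continuousOn_Icc hg
  obtain ⟨t, ht, hts⟩ := intermediate_value_Ioo hab hcont (by simpa using hs)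
  have hd := HasDerivAt.of_leftInvOn_Icc hcont (strictMonoOn_integral_of_pos hg hpos) hinv ht
    (hasDerivAt_integral_of_continuousOn_Icc hg ht) (hpos t (Ioo_subset_Icc_self ht)).ne'
  exact ⟨t, ht, hts, hts ▸ hd⟩

end Primitive

theorem ENNReal.exists_lt_of_ofReal_lt_biSup {ι : Type*} {D : Set ι} {F : ι → ℝ} {s : ℝ}
    (h : ENNReal.ofReal s < ⨆ t ∈ D, ENNReal.ofReal (F t)) : ∃ t ∈ D, s < F t := by
  obtain ⟨t, ht, hlt⟩ := lt_biSup_iff.1 h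
  exact ⟨t, ht, (ENNReal.ofReal_lt_ofReal_iff'.1 hlt).1⟩

theorem inv_primitive_mem_nhds_and_hasDerivAt {af : EReal} {q : ℝ} {f F Finv : ℝ → ℝ}
    (hfpos : ∀ t : ℝ, 0 ≤ t → (t : EReal) < af → 0 < f t)
    (hf : ContinuousOn f {t : ℝ | 0 ≤ t ∧ (t : EReal) < af})
    (hF : F = fun t => ∫ s in (0:ℝ)..t, f s ^ (-q))
    (hFinv : ∀ t : ℝ, 0 ≤ t → (t : EReal) < af → Finv (F t) = t) {s : ℝ} (hs : 0 < s)
    (hsF : ENNReal.ofReal s < ⨆ t ∈ {t : ℝ | 0 ≤ t ∧ (t : EReal) < af}, ENNReal.ofReal (F t)) :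
    {t : ℝ | 0 ≤ t ∧ (t : EReal) < af} ∈ 𝓝 (Finv s) ∧ F (Finv s) = s ∧
      HasDerivAt Finv (f (Finv s) ^ q) s := by
  obtain ⟨T, hT, hsT⟩ := ENNReal.exists_lt_of_ofReal_lt_biSup hsF
  have hsub : Icc 0 T ⊆ {t : ℝ | 0 ≤ t ∧ (t : EReal) < af} := fun u hu =>
    ⟨hu.1, (EReal.coe_le_coe_iff.2 hu.2).trans_lt hT.2⟩
  subst hF
  obtain ⟨t, ht, rfl, hd⟩ := exists_integral_eq_hasDerivAt_inv hT.1
    ((hf.mono hsub).rpow_const fun u hu => .inl (hfpos u (hsub hu).1 (hsub hu).2).ne')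
    (fun u hu => rpow_pos_of_pos (hfpos u (hsub hu).1 (hsub hu).2) _)
    (fun u hu => hFinv u (hsub hu).1 (hsub hu).2) ⟨hs, hsT⟩
  have htD : t ∈ {t : ℝ | 0 ≤ t ∧ (t : EReal) < af} := hsub (Ioo_subset_Icc_self ht)
  rw [hFinv t htD.1 htD.2]
  refine ⟨mem_of_superset (Ioo_mem_nhds ht.1 ht.2) (Ioo_subset_Icc_self.trans hsub), rfl, ?_⟩
  rwa [rpow_neg (hfpos t htD.1 htD.2).le, inv_inv] at hd

theorem rpow_two_sub_div_mul_self {a p : ℝ} (ha : 0 < a) (hp : p ≠ 1) :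
    a ^ ((2 - p) / (p - 1)) * a = a ^ (1 / (p - 1)) := by
  rw [← rpow_add_one ha.ne']
  congr 1
  field_simp [sub_ne_zero.2 hp]
  ring

theorem HasDerivAt.comp_hasGradientAt {E : Type*} [NormedAddCommGroup E]
    [InnerProductSpace ℝ E] [CompleteSpace E] {h : ℝ → ℝ} {u : E → ℝ} {h' : ℝ} {u' x : E}
    (hh : HasDerivAt h h' (u x)) (hu : HasGradientAt u u' x) :
    HasGradientAt (fun y => h (u y)) (h' • u') x := by
  rw [hasGradientAt_iff_hasFDerivAt, map_smul]
  exact hh.comp_hasFDerivAt x hu.hasFDerivAt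

section Flux

variable {N : ℕ} {p : ℝ}

theorem flux_eq_smul_of_gradient_eq_smul {u w : EuclideanSpace ℝ (Fin N) → ℝ}
    {y : EuclideanSpace ℝ (Fin N)} {c : ℝ} (hc : 0 < c) (h : gradient u y = c • gradient w y) :
    flux p u y = c ^ (p - 1) • flux p w y := by
  rw [flux, flux, h, norm_smul, norm_of_nonneg hc.le, mul_rpow hc.le (norm_nonneg _), smul_smul,
    smul_smul, show p - 1 = p - 2 + 1 by ring, rpow_add_one hc.ne']
  ring_nf

theorem inner_gradient_flux (hp : p ≠ 0) (u : EuclideanSpace ℝ (Fin N) → ℝ)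
    (y : EuclideanSpace ℝ (Fin N)) : inner ℝ (gradient u y) (flux p u y) = ‖gradient u y‖ ^ p := by
  rw [flux, inner_smul_right, real_inner_self_eq_norm_sq, ← rpow_natCast,
    ← rpow_add' (norm_nonneg _) (by simpa using hp)]
  norm_num

theorem Filter.EventuallyEq.pdiv_eq {V W : EuclideanSpace ℝ (Fin N) → EuclideanSpace ℝ (Fin N)}
    {x : EuclideanSpace ℝ (Fin N)} (h : V =ᶠ[𝓝 x] W) : pdiv V x = pdiv W x := by
  simp only [pdiv, h.fderiv_eq]

theorem pdiv_smul {φ : EuclideanSpace ℝ (Fin N) → ℝ}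
    {W : EuclideanSpace ℝ (Fin N) → EuclideanSpace ℝ (Fin N)} {x : EuclideanSpace ℝ (Fin N)}
    (hφ : DifferentiableAt ℝ φ x) (hW : DifferentiableAt ℝ W x) :
    pdiv (fun y => φ y • W y) x = φ x * pdiv W x + inner ℝ (gradient φ x) (W x) := by
  rw [pdiv, pdiv, fderiv_fun_smul hφ hW, Finset.mul_sum, PiLp.inner_apply,
    ← Finset.sum_add_distrib]
  refine Finset.sum_congr rfl fun i _ => ?_
  simp [← inner_gradient_left, EuclideanSpace.inner_single_right, mul_comm]

end Flux

theorem stmt11_general {N : ℕ} (p : ℝ) (hp : 1 < p)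
    (Ω : Set (EuclideanSpace ℝ (Fin N))) (hΩo : IsOpen Ω)
    (ψ : EuclideanSpace ℝ (Fin N) → ℝ) (hψ : ContDiffOn ℝ 2 ψ Ω)
    (x : EuclideanSpace ℝ (Fin N)) (hx : x ∈ Ω)
    (hfluxd : DifferentiableAt ℝ (flux p ψ) x)
    (hψeq : pdiv (flux p ψ) x = -1)
    (af : EReal) (f : ℝ → ℝ)
    (hfpos : ∀ t : ℝ, 0 ≤ t → (t : EReal) < af → 0 < f t)
    (hreg : ContDiffOn ℝ 1 f {t : ℝ | 0 ≤ t ∧ (t : EReal) < af})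
    (F : ℝ → ℝ) (hF : F = fun t => ∫ s in (0:ℝ)..t, f s ^ (-(1 / (p - 1))))
    (Finv : ℝ → ℝ)
    (hFinv : ∀ t : ℝ, 0 ≤ t → (t : EReal) < af → Finv (F t) = t)
    (α : ℝ) (hα : 0 < α) (hαx : 0 < α * ψ x)
    (hnear : ∀ᶠ y in nhds x, ENNReal.ofReal (α * ψ y) <
      ⨆ t ∈ {t : ℝ | 0 ≤ t ∧ (t : EReal) < af}, ENNReal.ofReal (F t)) :
    (∀ᶠ y in nhds x, 0 ≤ Finv (α * ψ y) ∧ ((Finv (α * ψ y) : ℝ) : EReal) < af ∧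
      F (Finv (α * ψ y)) = α * ψ y) ∧
    DifferentiableAt ℝ (flux p (fun y => Finv (α * ψ y))) x ∧
    pdiv (flux p (fun y => Finv (α * ψ y))) x =
      (α ^ p * deriv f (Finv (α * ψ x)) * f (Finv (α * ψ x)) ^ ((2 - p) / (p - 1)) *
          ‖gradient ψ x‖ ^ p - α ^ (p - 1)) * f (Finv (α * ψ x)) := by
  set v := fun y => Finv (α * ψ y)
  have hv : ∀ᶠ y in 𝓝 x, {t : ℝ | 0 ≤ t ∧ (t : EReal) < af} ∈ 𝓝 (v y) ∧
      F (v y) = α * ψ y ∧ HasGradientAt v ((f (v y) ^ (1 / (p - 1)) * α) • gradient ψ y) y := by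
    have hψx : ContinuousAt ψ x := (hψ.contDiffAt (hΩo.mem_nhds hx)).continuousAt
    filter_upwards [hΩo.mem_nhds hx,
      (continuousAt_const.mul hψx).eventually (eventually_gt_nhds hαx), hnear] with y hyΩ hpos hlt
    obtain ⟨hD, hFv, hd⟩ :=
      inv_primitive_mem_nhds_and_hasDerivAt hfpos hreg.continuousOn hF hFinv hpos hlt
    have hψy := (hψ.contDiffAt (hΩo.mem_nhds hyΩ)).differentiableAt two_ne_zero
    exact ⟨hD, hFv, (hd.comp (ψ y) (hasDerivAt_const_mul α)).comp_hasGradientAt hψy.hasGradientAt⟩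
  have hflux : flux p v =ᶠ[𝓝 x] fun y => (α ^ (p - 1) * f (v y)) • flux p ψ y := by
    filter_upwards [hv] with y ⟨hD, _, hgv⟩
    have hfv := hfpos (v y) (mem_of_mem_nhds hD).1 (mem_of_mem_nhds hD).2
    rw [flux_eq_smul_of_gradient_eq_smul (by positivity) hgv.gradient,
      mul_rpow (by positivity) hα.le, one_div, rpow_inv_rpow hfv.le (by linarith), mul_comm]
  obtain ⟨hD, -, hgv⟩ := hv.self_of_nhds
  have hfd := ((hreg.contDiffAt hD).differentiableAt one_ne_zero).hasDerivAt
  have hφ := (hfd.const_mul (α ^ (p - 1))).comp_hasGradientAt hgv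
  refine ⟨hv.mono fun y hy => ⟨(mem_of_mem_nhds hy.1).1, (mem_of_mem_nhds hy.1).2, hy.2.1⟩,
    hflux.differentiableAt_iff.2 (hφ.differentiableAt.smul hfluxd), ?_⟩
  have hfx := hfpos (v x) (mem_of_mem_nhds hD).1 (mem_of_mem_nhds hD).2
  rw [hflux.pdiv_eq, pdiv_smul hφ.differentiableAt hfluxd, hφ.gradient, real_inner_smul_left,
    real_inner_smul_left, inner_gradient_flux (by linarith), hψeq,
    ← rpow_two_sub_div_mul_self hfx hp.ne']
  have hαp : α ^ (p - 1) * α = α ^ p := by rw [← rpow_add_one hα.ne', sub_add_cancel]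
  linear_combination (deriv f (v x) * f (v x) ^ ((2 - p) / (p - 1)) * f (v x) *
    ‖gradient ψ x‖ ^ p) * hαp

/-- computation of the `p`-Laplacian of `v = F⁻¹ ∘ (α ψ)` at a point `x`
where `∇ψ(x) ≠ 0` and `Δ_p ψ(x) = -1`. Here `f` is positive, nondecreasing and `C¹` on
`[0, a_f)`, `F(t) = ∫₀ᵗ f(s)^(-1/(p-1)) ds`, `Finv` is the inverse of `F` (encoded as a
left inverse on `[0, a_f)`), `0 < α ψ(x)`, and `α ψ(y) < ‖F‖_∞ = sup F` for `y` near `x`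
(so that `v` is defined near `x`). -/
theorem stmt11 {N : ℕ} (p : ℝ) (hp : 1 < p)
    (Ω : Set (EuclideanSpace ℝ (Fin N))) (hΩo : IsOpen Ω)
    (ψ : EuclideanSpace ℝ (Fin N) → ℝ) (hψ : ContDiffOn ℝ 2 ψ Ω)
    (x : EuclideanSpace ℝ (Fin N)) (hx : x ∈ Ω)
    (hgrad : gradient ψ x ≠ 0)
    (hfluxd : DifferentiableAt ℝ (flux p ψ) x)
    (hψeq : pdiv (flux p ψ) x = -1)
    (af : EReal) (haf : 0 < af) (f : ℝ → ℝ)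
    (hfpos : ∀ t : ℝ, 0 ≤ t → (t : EReal) < af → 0 < f t)
    (hmono : MonotoneOn f {t : ℝ | 0 ≤ t ∧ (t : EReal) < af})
    (hreg : ContDiffOn ℝ 1 f {t : ℝ | 0 ≤ t ∧ (t : EReal) < af})
    (F : ℝ → ℝ) (hF : F = fun t => ∫ s in (0:ℝ)..t, f s ^ (-(1 / (p - 1))))
    (Finv : ℝ → ℝ)
    (hFinv : ∀ t : ℝ, 0 ≤ t → (t : EReal) < af → Finv (F t) = t)
    (α : ℝ) (hα : 0 < α) (hαx : 0 < α * ψ x)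
    (hnear : ∀ᶠ y in nhds x, ENNReal.ofReal (α * ψ y) <
      ⨆ t ∈ {t : ℝ | 0 ≤ t ∧ (t : EReal) < af}, ENNReal.ofReal (F t)) :
    (∀ᶠ y in nhds x, 0 ≤ Finv (α * ψ y) ∧ ((Finv (α * ψ y) : ℝ) : EReal) < af ∧
      F (Finv (α * ψ y)) = α * ψ y) ∧
    DifferentiableAt ℝ (flux p (fun y => Finv (α * ψ y))) x ∧
    pdiv (flux p (fun y => Finv (α * ψ y))) x =
      (α ^ p * deriv f (Finv (α * ψ x)) * f (Finv (α * ψ x)) ^ ((2 - p) / (p - 1)) *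
          ‖gradient ψ x‖ ^ p - α ^ (p - 1)) * f (Finv (α * ψ x)) :=
  stmt11_general p hp Ω hΩo ψ hψ x hx hfluxd hψeq af f hfpos hreg F hF Finv hFinv α hα hαx hnear
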